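/- arXiv:1410.4247 — 2 statements merged into one kernel-verified Lean document; each statement's English description precedes it below -/
import Mathlib

section
/- Let Ŝₖ,ₙ : [0,τ] → [0,1], k = 1,…,m, be estimators indexed by n, and suppose sup_t |Ŝ_{k₀,n}(t) − S(t)| → 0 as n → ∞ for some fixed k₀, where S : [0,τ] → [0,1]. Let α̂ₙ minimize ∫₀^τ (Σₖ αₖ Ŝₖ,ₙ(t) − S(t))² dt over the simplex {α : αₖ ≥ 0, Σ αₖ = 1}. Then |∫₀^τ Σₖ α̂ₖ,ₙ Ŝₖ,ₙ(t) dt − ∫₀^τ S(t) dt| → 0. -/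
/-!
Testing the L²-optimal weights against the vertex of the simplex at `k₀` shows that the L² error
of the stacked estimator is at most that of `Ŝ_{k₀}`, which tends to zero by uniform convergence
on a set of finite measure. Cauchy–Schwarz, `|∫ (f - S)| ≤ √(τ ∫ (f - S)²)`, then carries the
L² convergence over to the restricted means.
-/

open MeasureTheory Filter Topology
open scoped ENNReal

theorem abs_integral_le_sqrt_measureReal_mul_integral_sq {α : Type*} [MeasurableSpace α]
    {μ : Measure α} [IsFiniteMeasure μ] {f : α → ℝ} (hf : MemLp f 2 μ) :
    |∫ a, f a ∂μ| ≤ √(μ.real Set.univ * ∫ a, f a ^ 2 ∂μ) := by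
  have hpq : (2 : ℝ).HolderConjugate 2 := Real.HolderConjugate.two_two
  have holder := integral_mul_norm_le_Lp_mul_Lq hpq (f := f) (g := fun _ => (1 : ℝ))
    (by simpa using hf) (by simpa using memLp_const (1 : ℝ))
  have hsq : ∀ x : ℝ, ‖x‖ ^ (2 : ℝ) = x ^ 2 := fun x => by
    rw [Real.rpow_two, Real.norm_eq_abs, sq_abs]
  simp only [hsq, norm_one, mul_one, integral_const, smul_eq_mul] at holder
  rw [Real.sqrt_eq_rpow, Real.mul_rpow measureReal_nonneg (integral_nonneg fun _ => sq_nonneg _),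
    mul_comm]
  calc |∫ a, f a ∂μ| ≤ ∫ a, ‖f a‖ ∂μ := by simpa using norm_integral_le_integral_norm f
    _ ≤ _ := by simpa [one_div] using holder

theorem TendstoUniformlyOn.tendsto_setIntegral_sq_sub {ι α : Type*} [MeasurableSpace α]
    {μ : Measure α} {l : Filter ι} {F : ι → α → ℝ} {f : α → ℝ} {s : Set α} (hs : μ s < ⊤)
    (h : TendstoUniformlyOn F f l s) :
    Tendsto (fun i => ∫ a in s, (F i a - f a) ^ 2 ∂μ) l (𝓝 0) := by
  rw [Metric.tendsto_nhds]
  intro ε hε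
  set c := ε / (μ.real s + 1)
  have hc : 0 < c := div_pos hε (by positivity)
  filter_upwards [Metric.tendstoUniformlyOn_iff.1 h (√c) (Real.sqrt_pos.2 hc)] with i hi
  have hbound : ∀ a ∈ s, ‖(F i a - f a) ^ 2‖ ≤ c := fun a ha => by
    have hdist := hi a ha
    rw [dist_comm, Real.dist_eq] at hdist
    rw [norm_pow, Real.norm_eq_abs, ← Real.sq_sqrt hc.le]
    exact pow_le_pow_left₀ (abs_nonneg _) hdist.le 2
  calc dist (∫ a in s, (F i a - f a) ^ 2 ∂μ) 0 ≤ c * μ.real s := by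
        simpa using norm_setIntegral_le_of_norm_le_const hs hbound
    _ < ε := by
        rw [div_mul_eq_mul_div, div_lt_iff₀ (by positivity)]
        nlinarith [measureReal_nonneg (μ := μ) (s := s)]

theorem memLp_restrict_Ioc_of_mapsTo_Icc_zero_one {τ : ℝ} {f : ℝ → ℝ} {p : ℝ≥0∞}
    (hf : Measurable f) (hrange : Set.MapsTo f (Set.Icc 0 τ) (Set.Icc 0 1)) :
    MemLp f p (volume.restrict (Set.Ioc 0 τ)) := by
  refine MemLp.of_bound hf.aestronglyMeasurable 1 ?_
  filter_upwards [ae_restrict_mem measurableSet_Ioc] with t ht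
  obtain ⟨h0, h1⟩ := hrange (Set.Ioc_subset_Icc_self ht)
  rw [Real.norm_eq_abs, abs_le]
  constructor <;> linarith

theorem stmt_12_general (τ : ℝ) (m : ℕ)
    (Shat : ℕ → Fin m → ℝ → ℝ) (S : ℝ → ℝ)
    (hmeas : ∀ n k, Measurable (Shat n k)) (hmeasS : Measurable S)
    (hrange : ∀ n k, ∀ t ∈ Set.Icc 0 τ, Shat n k t ∈ Set.Icc (0 : ℝ) 1)
    (hSrange : ∀ t ∈ Set.Icc 0 τ, S t ∈ Set.Icc (0 : ℝ) 1)
    (k₀ : Fin m)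
    (hunif : TendstoUniformlyOn (fun n => Shat n k₀) S atTop (Set.Icc 0 τ))
    (αhat : ℕ → Fin m → ℝ)
    (hmin : ∀ n, ∀ α : Fin m → ℝ, (∀ k, 0 ≤ α k) → ∑ k, α k = 1 →
      (∫ t in Set.Ioc 0 τ, ((∑ k, αhat n k * Shat n k t) - S t) ^ 2) ≤
        ∫ t in Set.Ioc 0 τ, ((∑ k, α k * Shat n k t) - S t) ^ 2) :
    Tendsto (fun n => |(∫ t in Set.Ioc 0 τ, ∑ k, αhat n k * Shat n k t) -
        ∫ t in Set.Ioc 0 τ, S t|) atTop (nhds 0) := by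
  set stacked : ℕ → ℝ → ℝ := fun n t => ∑ k, αhat n k * Shat n k t
  have herr₀ := (hunif.mono Set.Ioc_subset_Icc_self).tendsto_setIntegral_sq_sub
    (μ := volume) measure_Ioc_lt_top
  have herr : Tendsto (fun n => ∫ t in Set.Ioc 0 τ, (stacked n t - S t) ^ 2) atTop (𝓝 0) := by
    have hvertex : (0 : Fin m → ℝ) ≤ Pi.single k₀ 1 := Pi.single_nonneg.2 zero_le_one
    refine squeeze_zero (fun n => integral_nonneg fun _ => sq_nonneg _) (fun n => ?_) herr₀
    simpa [Pi.single_apply] using hmin n (Pi.single k₀ 1) hvertex (by simp)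
  have hS : MemLp S 2 (volume.restrict (Set.Ioc 0 τ)) :=
    memLp_restrict_Ioc_of_mapsTo_Icc_zero_one hmeasS hSrange
  have hbound : ∀ n, |(∫ t in Set.Ioc 0 τ, stacked n t) - ∫ t in Set.Ioc 0 τ, S t| ≤
      √(volume.real (Set.Ioc 0 τ) * ∫ t in Set.Ioc 0 τ, (stacked n t - S t) ^ 2) := fun n => by
    have hstacked : MemLp (stacked n) 2 (volume.restrict (Set.Ioc 0 τ)) :=
      memLp_finsetSum _ fun k _ =>
        (memLp_restrict_Ioc_of_mapsTo_Icc_zero_one (hmeas n k) (hrange n k)).const_mul _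
    rw [← integral_sub (hstacked.integrable one_le_two) (hS.integrable one_le_two)]
    simpa using abs_integral_le_sqrt_measureReal_mul_integral_sq (hstacked.sub hS)
  refine squeeze_zero (fun n => abs_nonneg _) hbound ?_
  simpa using (herr.const_mul (volume.real (Set.Ioc 0 τ))).sqrt

theorem stmt_12 (τ : ℝ) (hτ : 0 < τ) (m : ℕ)
    (Shat : ℕ → Fin m → ℝ → ℝ) (S : ℝ → ℝ)
    (hmeas : ∀ n k, Measurable (Shat n k)) (hmeasS : Measurable S)
    (hrange : ∀ n k, ∀ t ∈ Set.Icc 0 τ, Shat n k t ∈ Set.Icc (0 : ℝ) 1)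
    (hSrange : ∀ t ∈ Set.Icc 0 τ, S t ∈ Set.Icc (0 : ℝ) 1)
    (k₀ : Fin m)
    (hunif : TendstoUniformlyOn (fun n => Shat n k₀) S atTop (Set.Icc 0 τ))
    (αhat : ℕ → Fin m → ℝ)
    (hα : ∀ n k, 0 ≤ αhat n k) (hαsum : ∀ n, ∑ k, αhat n k = 1)
    (hmin : ∀ n, ∀ α : Fin m → ℝ, (∀ k, 0 ≤ α k) → ∑ k, α k = 1 →
      (∫ t in Set.Ioc 0 τ, ((∑ k, αhat n k * Shat n k t) - S t) ^ 2) ≤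
        ∫ t in Set.Ioc 0 τ, ((∑ k, α k * Shat n k t) - S t) ^ 2) :
    Tendsto (fun n => |(∫ t in Set.Ioc 0 τ, ∑ k, αhat n k * Shat n k t) -
        ∫ t in Set.Ioc 0 τ, S t|) atTop (nhds 0) :=
  stmt_12_general τ m Shat S hmeas hmeasS hrange hSrange k₀ hunif αhat hmin
end

section
/- Let T and C be independent nonnegative random variables with survival functions S and G, G continuous, and fix t with G(t) > 0. Set Y = min(T, C), Δ(t) = 1{min(T, t) ≤ C}, Z(t) = 1{T > t}. Then for any constant s, E[ Δ(t)/G(min(T, t)) · (Z(t) − s)² ] = E[(Z(t) − s)²] = S(t)(1−S(t)) + (s − S(t))². -/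
/-!
Conditionally on `T = x`, independence makes the censoring indicator `1{min(x, t) ≤ C}` have mean
`P(C ≥ min(x, t))`, which is `G(min(x, t))` because `G` is continuous. Hence the IPCW weight has
conditional mean one, and integrating first in `C` (Fubini on the product of the laws) turns the
weighted integrand into `(Z(t) - s)²`. The closed form is the bias-variance decomposition of the
Bernoulli variable `Z(t)`, whose mean is `S(t)`.
-/

open MeasureTheory ProbabilityTheory Set Filter Topology

theorem measure_Ici_eq_measure_Ioi_of_continuousWithinAt {μ : Measure ℝ} [IsFiniteMeasure μ]
    {a : ℝ} (h : ContinuousWithinAt (fun u ↦ μ.real (Ioi u)) (Iio a) a) :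
    μ (Ici a) = μ (Ioi a) := by
  have hIci : Tendsto (fun r ↦ μ (Ioi (a - r))) (𝓝[>] 0) (𝓝 (μ (Ici a))) := by
    have hinter : ⋂ r > (0 : ℝ), Ioi (a - r) = Ici a := by
      ext x
      simp only [mem_iInter, mem_Ioi, mem_Ici]
      refine ⟨fun hx ↦ le_of_forall_pos_lt_add fun r hr ↦ ?_, fun hx r hr ↦ by linarith⟩
      linarith [hx r hr]
    rw [← hinter]
    exact tendsto_measure_biInter_gt (fun _ _ ↦ measurableSet_Ioi.nullMeasurableSet)
      (fun _ _ _ hij ↦ Ioi_subset_Ioi (by linarith)) ⟨1, one_pos, measure_ne_top _ _⟩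
  have hIoi : Tendsto (fun r ↦ μ (Ioi (a - r))) (𝓝[>] 0) (𝓝 (μ (Ioi a))) := by
    have hshift : Tendsto (fun r ↦ a - r) (𝓝[>] 0) (𝓝[<] a) := by
      refine tendsto_nhdsWithin_of_tendsto_nhds_of_eventually_within _ ?_ ?_
      · simpa using (tendsto_const_nhds (x := a).sub tendsto_id).mono_left
          (nhdsWithin_le_nhds (a := (0 : ℝ)) (s := Ioi 0))
      · filter_upwards [self_mem_nhdsWithin] with r (hr : 0 < r)
        simpa using hr
    have hreal (s : Set ℝ) : μ s = ENNReal.ofReal (μ.real s) :=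
      (ofReal_measureReal (measure_ne_top μ s)).symm
    simpa only [hreal, Function.comp_def] using ENNReal.tendsto_ofReal (h.tendsto.comp hshift)
  exact tendsto_nhds_unique hIci hIoi

/-- The IPCW weight `Δ(t) / G(min(T, t))` at `p = (T, C)`, where `ν` is the law of `C` and
`G u = ν [u, ∞)`. -/
noncomputable def ipcwWeight (ν : Measure ℝ) (t : ℝ) (p : ℝ × ℝ) : ℝ :=
  (if min p.1 t ≤ p.2 then 1 else 0) / ν.real (Ici (min p.1 t))

section ipcwWeight

variable {ν : Measure ℝ} [IsFiniteMeasure ν] {t : ℝ}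

theorem measurable_ipcwWeight : Measurable (ipcwWeight ν t) := by
  refine (Measurable.ite ?_ measurable_const measurable_const).div ?_
  · exact measurableSet_le (measurable_fst.min measurable_const) measurable_snd
  · refine (Antitone.measurable (f := fun x ↦ ν.real (Ici (min x t))) fun x y hxy ↦ ?_).comp
      measurable_fst
    exact measureReal_mono (Ici_subset_Ici.mpr (min_le_min_right t hxy))

theorem measureReal_Ici_le_measureReal_Ici_min (x : ℝ) :
    ν.real (Ici t) ≤ ν.real (Ici (min x t)) :=
  measureReal_mono (Ici_subset_Ici.mpr (min_le_right x t))

theorem norm_ipcwWeight_le (ht : 0 < ν.real (Ici t)) (p : ℝ × ℝ) :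
    ‖ipcwWeight ν t p‖ ≤ (ν.real (Ici t))⁻¹ := by
  have hind : (if min p.1 t ≤ p.2 then (1 : ℝ) else 0) ≤ 1 := by split_ifs <;> norm_num
  rw [ipcwWeight, Real.norm_eq_abs, abs_of_nonneg (div_nonneg (by split_ifs <;> norm_num)
    measureReal_nonneg), ← one_div]
  exact div_le_div₀ zero_le_one hind ht (measureReal_Ici_le_measureReal_Ici_min p.1)

theorem integral_ipcwWeight (ht : 0 < ν.real (Ici t)) (x : ℝ) :
    ∫ y, ipcwWeight ν t (x, y) ∂ν = 1 := by
  have hind : (fun y ↦ if min x t ≤ y then (1 : ℝ) else 0) = (Ici (min x t)).indicator 1 := by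
    ext y
    simp [indicator_apply]
  simp only [ipcwWeight]
  rw [integral_div, hind, integral_indicator_one measurableSet_Ici,
    div_self (ht.trans_le (measureReal_Ici_le_measureReal_Ici_min x)).ne']

variable {μ : Measure ℝ} {f : ℝ → ℝ}

theorem integrable_ipcwWeight_mul (hf : Integrable f μ) (ht : 0 < ν.real (Ici t)) :
    Integrable (fun p ↦ ipcwWeight ν t p * f p.1) (μ.prod ν) :=
  ((hf.norm.comp_fst ν).const_mul _).mono'
    (measurable_ipcwWeight.aestronglyMeasurable.mul hf.aestronglyMeasurable.comp_fst)
    (.of_forall fun p ↦ (norm_mul_le _ _).trans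
      (mul_le_mul_of_nonneg_right (norm_ipcwWeight_le ht p) (norm_nonneg _)))

theorem integral_prod_ipcwWeight_mul [SFinite μ] (hf : Integrable f μ)
    (ht : 0 < ν.real (Ici t)) :
    ∫ p, ipcwWeight ν t p * f p.1 ∂μ.prod ν = ∫ x, f x ∂μ := by
  rw [integral_prod _ (integrable_ipcwWeight_mul hf ht)]
  refine integral_congr_ae (.of_forall fun x ↦ ?_)
  change ∫ y, ipcwWeight ν t (x, y) * f x ∂ν = f x
  rw [integral_mul_const, integral_ipcwWeight ht, one_mul]

end ipcwWeight

theorem integral_ipcwWeight_mul_of_indepFun {Ω : Type*} [MeasurableSpace Ω] {P : Measure Ω}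
    [IsFiniteMeasure P] {T C : Ω → ℝ} (hT : AEMeasurable T P) (hC : AEMeasurable C P)
    (hindep : IndepFun T C P) {f : ℝ → ℝ} (hf : Integrable f (P.map T)) {t : ℝ}
    (ht : 0 < (P.map C).real (Ici t)) :
    ∫ ω, ipcwWeight (P.map C) t (T ω, C ω) * f (T ω) ∂P = ∫ ω, f (T ω) ∂P := by
  have hlaw := (indepFun_iff_map_prod_eq_prod_map_map hT hC).mp hindep
  have hint := integrable_ipcwWeight_mul hf ht
  rw [← hlaw] at hint
  rw [← integral_map hT hf.aestronglyMeasurable, ← integral_prod_ipcwWeight_mul hf ht, ← hlaw,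
    integral_map (hT.prodMk hC) hint.aestronglyMeasurable]

theorem integral_indicator_one_sub_sq {Ω : Type*} [MeasurableSpace Ω] {P : Measure Ω}
    [IsProbabilityMeasure P] {A : Set Ω} (hA : MeasurableSet A) (s : ℝ) :
    ∫ ω, (A.indicator 1 ω - s) ^ 2 ∂P = P.real A * (1 - P.real A) + (s - P.real A) ^ 2 := by
  have hsq : (fun ω ↦ (A.indicator 1 ω - s) ^ 2) =
      fun ω ↦ s ^ 2 + A.indicator (fun _ ↦ 1 - 2 * s) ω := by
    ext ω
    by_cases hω : ω ∈ A
    · simp only [hω, indicator_of_mem, Pi.one_apply]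
      ring
    · simp [hω]
  rw [hsq, integral_add (integrable_const _) ((integrable_const _).indicator hA),
    integral_const, integral_indicator_const _ hA, probReal_univ, one_smul, smul_eq_mul]
  ring

theorem stmt_17_general {Ω : Type*} [MeasurableSpace Ω] (P : Measure Ω) [IsProbabilityMeasure P]
    (T C : Ω → ℝ) (hT : Measurable T) (hC : Measurable C)
    (hindep : IndepFun T C P)
    (S G : ℝ → ℝ)
    (hS : ∀ u, S u = (P {ω | T ω > u}).toReal)
    (hG : ∀ u, G u = (P {ω | C ω > u}).toReal)
    (hGcont : Continuous G) (t : ℝ) (hGt : 0 < G t) (s : ℝ) :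
    (∫ ω, (if min (T ω) t ≤ C ω then (1 : ℝ) else 0) / G (min (T ω) t) *
          ((if T ω > t then (1 : ℝ) else 0) - s) ^ 2 ∂P) =
        ∫ ω, ((if T ω > t then (1 : ℝ) else 0) - s) ^ 2 ∂P ∧
      (∫ ω, ((if T ω > t then (1 : ℝ) else 0) - s) ^ 2 ∂P) =
        S t * (1 - S t) + (s - S t) ^ 2 := by
  have hG_law : (fun u ↦ (P.map C).real (Ioi u)) = G :=
    funext fun u ↦ by rw [hG, map_measureReal_apply hC measurableSet_Ioi]; rfl
  have hG_Ici (u : ℝ) : (P.map C).real (Ici u) = G u := by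
    rw [measureReal_def, measure_Ici_eq_measure_Ioi_of_continuousWithinAt
      (hG_law ▸ hGcont.continuousWithinAt), ← measureReal_def, ← hG_law]
  set f : ℝ → ℝ := fun x ↦ ((if x > t then (1 : ℝ) else 0) - s) ^ 2
  have hf : Integrable f (P.map T) := by
    refine .of_bound ?_ (max ((1 - s) ^ 2) (s ^ 2)) (.of_forall fun x ↦ ?_)
    · exact ((Measurable.ite measurableSet_Ioi measurable_const measurable_const).sub_const s
        |>.pow_const 2).aestronglyMeasurable
    · simp only [f]
      split_ifs <;> simp
  refine ⟨?_, ?_⟩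
  · simpa only [ipcwWeight, hG_Ici] using
      integral_ipcwWeight_mul_of_indepFun hT.aemeasurable hC.aemeasurable hindep hf
        (hG_Ici t ▸ hGt)
  · rw [hS, ← measureReal_def]
    simpa [indicator_apply] using
      integral_indicator_one_sub_sq (P := P) (measurableSet_lt measurable_const hT) s

theorem stmt_17 {Ω : Type*} [MeasurableSpace Ω] (P : Measure Ω) [IsProbabilityMeasure P]
    (T C : Ω → ℝ) (hT : Measurable T) (hC : Measurable C)
    (hT0 : ∀ ω, 0 ≤ T ω) (hC0 : ∀ ω, 0 ≤ C ω)
    (hindep : IndepFun T C P)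
    (S G : ℝ → ℝ)
    (hS : ∀ u, S u = (P {ω | T ω > u}).toReal)
    (hG : ∀ u, G u = (P {ω | C ω > u}).toReal)
    (hGcont : Continuous G) (t : ℝ) (hGt : 0 < G t) (s : ℝ) :
    (∫ ω, (if min (T ω) t ≤ C ω then (1 : ℝ) else 0) / G (min (T ω) t) *
          ((if T ω > t then (1 : ℝ) else 0) - s) ^ 2 ∂P) =
        ∫ ω, ((if T ω > t then (1 : ℝ) else 0) - s) ^ 2 ∂P ∧
      (∫ ω, ((if T ω > t then (1 : ℝ) else 0) - s) ^ 2 ∂P) =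
        S t * (1 - S t) + (s - S t) ^ 2 :=
  stmt_17_general P T C hT hC hindep S G hS hG hGcont t hGt s
end
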